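/- arXiv:1505.00526 — 3 statements merged into one kernel-verified Lean document; each statement's English description precedes it below -/
import Mathlib

section
/- Let A ∈ ℝ^{m×n} be a matrix with SVD A = U·diag(Σ₁,Σ₂)·[V₁ᵀ; V₂ᵀ], where Σ₁ contains the top k singular values, and let Ω ∈ ℝ^{n×ℓ} be any matrix. Set Y = AΩ, Ω₁ = V₁ᵀΩ, Ω₂ = V₂ᵀΩ. If Ω₁ has full row rank k, then ‖A − P_Y A‖₂² ≤ ‖Σ₂‖₂² + ‖Σ₂Ω₂Ω₁†‖₂², where P_Y = YY† is the orthogonal projection onto the column space of Y and Ω₁† is the Moore–Penrose pseudoinverse. -/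
open Matrix
open scoped Matrix.Norms.L2Operator

/-!
Let `R = 1 - P`. Since `R` kills `Y = AΩ` and `Ω₁ Ω₁† = 1`, applying `R` to
`AΩΩ₁† = U₁Σ₁ + U₂Σ₂Ω₂Ω₁†` gives `R U₁Σ₁ = -R U₂ (Σ₂Ω₂Ω₁†)`, so the top block of `A` disappears
from the residual:
`(1 - P) A = R U₂ · [-Σ₂Ω₂Ω₁†, Σ₂] · Vᵀ`.
The factors `R U₂` and `Vᵀ` are contractions, and a row of two blocks has squared norm at most
the sum of the squared norms of the blocks, since `‖[X, Y]‖² = ‖XXᴴ + YYᴴ‖`.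
-/

namespace Matrix

section Algebra

variable {α : Type*} {m n k r : Type*}

lemma mul_add_mul_eq_of_mul_mul_eq_zero [Ring α] [Fintype m] [Fintype n] [Fintype k] [Fintype r]
    [DecidableEq k] {p l : Type*} [Fintype l] {R : Matrix p m α} {X₁ : Matrix m k α}
    {X₂ : Matrix m r α} {B₁ : Matrix k n α} {B₂ : Matrix r n α} {Ω : Matrix n l α}
    {G : Matrix l k α} (hΩ : R * ((X₁ * B₁ + X₂ * B₂) * Ω) = 0) (hG : B₁ * Ω * G = 1) :
    R * (X₁ * B₁ + X₂ * B₂) = R * X₂ * (B₂ - B₂ * Ω * G * B₁) := by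
  have hX₁ : R * X₁ = -(R * X₂ * B₂ * Ω * G) :=
    calc R * X₁ = R * ((X₁ * B₁ + X₂ * B₂) * Ω) * G - R * X₂ * B₂ * Ω * G := by
          simp only [Matrix.add_mul, Matrix.mul_add, Matrix.mul_assoc]
          rw [← Matrix.mul_assoc B₁, hG, Matrix.mul_one, add_sub_cancel_right]
      _ = -(R * X₂ * B₂ * Ω * G) := by rw [hΩ, Matrix.zero_mul, zero_sub]
  rw [Matrix.mul_add, ← Matrix.mul_assoc, hX₁]
  simp only [Matrix.mul_sub, Matrix.neg_mul, Matrix.mul_assoc]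
  abel

lemma mul_diagonal_mul_transpose_eq_add [CommSemiring α] [Fintype k] [Fintype r]
    [DecidableEq k] [DecidableEq r] (U : Matrix m (k ⊕ r) α) (d : k ⊕ r → α)
    (W : Matrix n (k ⊕ r) α) :
    U * diagonal d * Wᵀ = U.toCols₁ * diagonal (d ∘ Sum.inl) * W.toCols₁ᵀ
      + U.toCols₂ * diagonal (d ∘ Sum.inr) * W.toCols₂ᵀ := by
  ext i j
  simp [mul_apply, diagonal_apply, Fintype.sum_sum_type]

lemma sub_mul_eq_toCols₂_mul_fromCols_mul_transpose [CommRing α] [Fintype m] [Fintype n]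
    [Fintype k] [Fintype r] [DecidableEq m] [DecidableEq k] [DecidableEq r] {l : Type*}
    [Fintype l] {U : Matrix m (k ⊕ r) α} {d : k ⊕ r → α} {V : Matrix n (k ⊕ r) α}
    {A : Matrix m n α} {Ω : Matrix n l α} {P : Matrix m m α} {G : Matrix l k α}
    (hA : A = U * diagonal d * Vᵀ) (hPY : P * (A * Ω) = A * Ω) (hG : V.toCols₁ᵀ * Ω * G = 1) :
    A - P * A = (1 - P) * U.toCols₂ *
      fromCols (-(diagonal (d ∘ Sum.inr) * (V.toCols₂ᵀ * Ω) * G)) (diagonal (d ∘ Sum.inr)) * Vᵀ := by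
  have hAΩ : (1 - P) * (A * Ω) = 0 := by rw [Matrix.sub_mul, Matrix.one_mul, hPY, sub_self]
  rw [hA, mul_diagonal_mul_transpose_eq_add] at hAΩ
  have hVt : Vᵀ = fromRows V.toCols₁ᵀ V.toCols₂ᵀ := by rw [← transpose_fromCols, fromCols_toCols]
  rw [show A - P * A = (1 - P) * A by rw [Matrix.sub_mul, Matrix.one_mul], hA,
    mul_diagonal_mul_transpose_eq_add, mul_add_mul_eq_of_mul_mul_eq_zero hAΩ hG, hVt,
    Matrix.mul_assoc _ (fromCols _ _), fromCols_mul_fromRows]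
  simp only [Matrix.mul_sub, Matrix.mul_add, Matrix.neg_mul, Matrix.mul_neg, Matrix.mul_assoc]
  abel

lemma toCols₂_conjTranspose_mul_self [Semiring α] [StarRing α] [Fintype m] [DecidableEq k]
    [DecidableEq r] {U : Matrix m (k ⊕ r) α} (hU : Uᴴ * U = 1) :
    U.toCols₂ᴴ * U.toCols₂ = 1 := by
  ext i j
  simpa [mul_apply, one_apply] using congrFun₂ hU (Sum.inr i) (Sum.inr j)

lemma isUnit_of_rank_eq_card [Field α] [Fintype n] [DecidableEq n] {A : Matrix n n α}
    (h : A.rank = Fintype.card n) : IsUnit A := by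
  rw [← mulVec_surjective_iff_isUnit]
  have : LinearMap.range A.mulVecLin = ⊤ :=
    Submodule.eq_top_of_finrank_eq (by rw [← rank, h, Module.finrank_fintype_fun_eq_card])
  exact LinearMap.range_eq_top.mp this

end Algebra

section L2OpNorm

variable {𝕜 : Type*} [RCLike 𝕜] {m n : Type*} [Fintype m] [Fintype n] [DecidableEq n]

lemma l2_opNorm_le_one_of_conjTranspose_mul_self_eq_one {M : Matrix m n 𝕜} (h : Mᴴ * M = 1) :
    ‖M‖ ≤ 1 := by
  have h1 : ‖(1 : Matrix n n 𝕜)‖ ≤ 1 := IsStarProjection.norm_le _ (.one _)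
  rw [← h, l2_opNorm_conjTranspose_mul_self] at h1
  nlinarith [norm_nonneg M]

lemma l2_opNorm_mul_mul_le_of_le_one [DecidableEq m] {p q : Type*} [Fintype p] [Fintype q]
    [DecidableEq q] {M : Matrix p m 𝕜} {N : Matrix n q 𝕜} (hM : ‖M‖ ≤ 1) (hN : ‖N‖ ≤ 1)
    (X : Matrix m n 𝕜) : ‖M * X * N‖ ≤ ‖X‖ :=
  calc ‖M * X * N‖ ≤ ‖M‖ * ‖X‖ * ‖N‖ :=
        (l2_opNorm_mul _ _).trans (by gcongr; exact l2_opNorm_mul _ _)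
    _ ≤ 1 * ‖X‖ * 1 := by gcongr
    _ = ‖X‖ := by ring

lemma l2_opNorm_mul_conjTranspose_self [DecidableEq m] (A : Matrix m n 𝕜) :
    ‖A * Aᴴ‖ = ‖A‖ * ‖A‖ := by
  rw [← l2_opNorm_conjTranspose A, ← l2_opNorm_conjTranspose_mul_self, conjTranspose_conjTranspose]

lemma l2_opNorm_fromCols_sq_le [DecidableEq m] {n' : Type*} [Fintype n'] [DecidableEq n']
    (A₁ : Matrix m n 𝕜) (A₂ : Matrix m n' 𝕜) :
    ‖fromCols A₁ A₂‖ ^ 2 ≤ ‖A₁‖ ^ 2 + ‖A₂‖ ^ 2 := by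
  simp only [sq, ← l2_opNorm_mul_conjTranspose_self]
  rw [conjTranspose_fromCols_eq_fromRows_conjTranspose, fromCols_mul_fromRows]
  exact norm_add_le _ _

end L2OpNorm

end Matrix

theorem stmt_7_general {m n k r ℓ : ℕ}
    (U : Matrix (Fin m) (Fin k ⊕ Fin r) ℝ) (V : Matrix (Fin n) (Fin k ⊕ Fin r) ℝ)
    (σ : Fin k ⊕ Fin r → ℝ)
    (hU : Uᵀ * U = 1) (hV : Vᵀ * V = 1)
    (A : Matrix (Fin m) (Fin n) ℝ) (hA : A = U * Matrix.diagonal σ * Vᵀ)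
    (Ω : Matrix (Fin n) (Fin ℓ) ℝ)
    (Ω₁ : Matrix (Fin k) (Fin ℓ) ℝ) (hΩ₁ : Ω₁ = (V.submatrix id Sum.inl)ᵀ * Ω)
    (Ω₂ : Matrix (Fin r) (Fin ℓ) ℝ) (hΩ₂ : Ω₂ = (V.submatrix id Sum.inr)ᵀ * Ω)
    (hrank : Ω₁.rank = k)
    (P : Matrix (Fin m) (Fin m) ℝ)
    (hPsymm : Pᵀ = P) (hPidem : P * P = P)
    (hPY : P * (A * Ω) = A * Ω) :
    ‖A - P * A‖ ^ 2 ≤ ‖Matrix.diagonal (σ ∘ Sum.inr)‖ ^ 2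
      + ‖Matrix.diagonal (σ ∘ Sum.inr) * Ω₂ * (Ω₁ᵀ * (Ω₁ * Ω₁ᵀ)⁻¹)‖ ^ 2 := by
  have hG : Ω₁ * (Ω₁ᵀ * (Ω₁ * Ω₁ᵀ)⁻¹) = 1 := by
    rw [← Matrix.mul_assoc, mul_nonsing_inv _ ((isUnit_iff_isUnit_det _).mp
      (isUnit_of_rank_eq_card (by rw [rank_self_mul_transpose, hrank, Fintype.card_fin])))]
  have hR : ‖1 - P‖ ≤ 1 :=
    IsStarProjection.norm_le _ (IsStarProjection.one_sub ⟨hPidem, by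
      simpa [IsSelfAdjoint, star] using hPsymm⟩)
  have hU₂ : ‖U.toCols₂‖ ≤ 1 := l2_opNorm_le_one_of_conjTranspose_mul_self_eq_one
    (toCols₂_conjTranspose_mul_self (by rwa [conjTranspose_eq_transpose_of_trivial]))
  have hVt : ‖Vᵀ‖ ≤ 1 := by
    rw [← conjTranspose_eq_transpose_of_trivial, l2_opNorm_conjTranspose]
    exact l2_opNorm_le_one_of_conjTranspose_mul_self_eq_one
      (by rwa [conjTranspose_eq_transpose_of_trivial])
  have hRU₂ : ‖(1 - P) * U.toCols₂‖ ≤ 1 :=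
    (l2_opNorm_mul _ _).trans (mul_le_one₀ hR (norm_nonneg _) hU₂)
  rw [sub_mul_eq_toCols₂_mul_fromCols_mul_transpose hA hPY
      (by rwa [show V.toCols₁ᵀ * Ω = Ω₁ from hΩ₁.symm]),
    show V.toCols₂ᵀ * Ω = Ω₂ from hΩ₂.symm, add_comm,
    ← norm_neg (diagonal (σ ∘ Sum.inr) * Ω₂ * _)]
  exact (pow_le_pow_left₀ (norm_nonneg _) (l2_opNorm_mul_mul_le_of_le_one hRU₂ hVt _) 2).trans
    (l2_opNorm_fromCols_sq_le _ _)

/-- If `A = U·diag(σ)·Vᵀ` is an SVD with right singular blocks `V₁, V₂`,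
`Y = AΩ`, `Ω₁ = V₁ᵀΩ`, `Ω₂ = V₂ᵀΩ`, `Ω₁` has full row rank `k`, and `P` is the orthogonal
projection onto the column space of `Y`, then
`‖A − P·A‖₂² ≤ ‖Σ₂‖₂² + ‖Σ₂·Ω₂·Ω₁†‖₂²`, where `Ω₁† = Ω₁ᵀ(Ω₁Ω₁ᵀ)⁻¹`. -/
theorem stmt_7 {m n k r ℓ : ℕ}
    (U : Matrix (Fin m) (Fin k ⊕ Fin r) ℝ) (V : Matrix (Fin n) (Fin k ⊕ Fin r) ℝ)
    (σ : Fin k ⊕ Fin r → ℝ)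
    (hU : Uᵀ * U = 1) (hV : Vᵀ * V = 1)
    (hσ : ∀ a, 0 ≤ σ a)
    (hord : ∀ (i : Fin k) (j : Fin r), σ (Sum.inr j) ≤ σ (Sum.inl i))
    (A : Matrix (Fin m) (Fin n) ℝ) (hA : A = U * Matrix.diagonal σ * Vᵀ)
    (Ω : Matrix (Fin n) (Fin ℓ) ℝ)
    (Ω₁ : Matrix (Fin k) (Fin ℓ) ℝ) (hΩ₁ : Ω₁ = (V.submatrix id Sum.inl)ᵀ * Ω)
    (Ω₂ : Matrix (Fin r) (Fin ℓ) ℝ) (hΩ₂ : Ω₂ = (V.submatrix id Sum.inr)ᵀ * Ω)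
    (hrank : Ω₁.rank = k)
    (P : Matrix (Fin m) (Fin m) ℝ)
    (hPsymm : Pᵀ = P) (hPidem : P * P = P)
    (hPY : P * (A * Ω) = A * Ω)
    (hPrange : ∃ B : Matrix (Fin ℓ) (Fin m) ℝ, P = (A * Ω) * B) :
    ‖A - P * A‖ ^ 2 ≤ ‖Matrix.diagonal (σ ∘ Sum.inr)‖ ^ 2
      + ‖Matrix.diagonal (σ ∘ Sum.inr) * Ω₂ * (Ω₁ᵀ * (Ω₁ * Ω₁ᵀ)⁻¹)‖ ^ 2 :=
  stmt_7_general U V σ hU hV A hA Ω Ω₁ hΩ₁ Ω₂ hΩ₂ hrank P hPsymm hPidem hPY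
end

section
/- Under the same setup, if Ω₁ has full row rank k, then ‖A − P_Y A‖_F² ≤ ‖Σ₂‖_F² + ‖Σ₂Ω₂Ω₁†‖_F², where ‖·‖_F is the Frobenius norm. -/
open Matrix

/-!
Write `A = U₁Σ₁V₁ᵀ + U₂Σ₂V₂ᵀ` and let `Ω₁† = Ω₁ᵀ(Ω₁Ω₁ᵀ)⁻¹`, a right inverse of `Ω₁` since `Ω₁`
has full row rank. Among all matrices whose columns lie in the range of `Y = AΩ`, the orthogonal
projection `P_Y A` is closest to `A` in Frobenius norm; compare it with `Y Ω₁† V₁ᵀ`. Since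
`Ω₁ Ω₁† = 1`, the `Σ₁` part cancels and the residual is `U₂ (Σ₂V₂ᵀ - Σ₂Ω₂Ω₁†V₁ᵀ)`. As `U₂` and `V`
have orthonormal columns, its squared Frobenius norm is `‖Σ₂‖_F² + ‖Σ₂Ω₂Ω₁†‖_F²`.
-/

namespace Matrix

section FrobeniusNorm

variable {l m n p : Type*} [Fintype l] [Fintype m] [Fintype n] [Fintype p]

def frobeniusSq (M : Matrix m n ℝ) : ℝ := ∑ i, ∑ j, M i j ^ 2

lemma frobeniusSq_nonneg (M : Matrix m n ℝ) : 0 ≤ frobeniusSq M :=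
  Finset.sum_nonneg fun _ _ => Finset.sum_nonneg fun _ _ => sq_nonneg _

lemma frobeniusSq_eq_trace (M : Matrix m n ℝ) : frobeniusSq M = (Mᵀ * M).trace := by
  simp only [frobeniusSq, trace, diag, mul_apply, transpose_apply, sq]
  exact Finset.sum_comm

lemma frobeniusSq_transpose (M : Matrix m n ℝ) : frobeniusSq Mᵀ = frobeniusSq M :=
  Finset.sum_comm

lemma frobeniusSq_neg (M : Matrix m n ℝ) : frobeniusSq (-M) = frobeniusSq M := by
  simp [frobeniusSq]

lemma frobeniusSq_fromCols (M₁ : Matrix m n ℝ) (M₂ : Matrix m p ℝ) :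
    frobeniusSq (fromCols M₁ M₂) = frobeniusSq M₁ + frobeniusSq M₂ := by
  simp [frobeniusSq, Finset.sum_add_distrib]

lemma frobeniusSq_add_of_transpose_mul_eq_zero {X Y : Matrix m n ℝ} (h : Xᵀ * Y = 0) :
    frobeniusSq (X + Y) = frobeniusSq X + frobeniusSq Y := by
  have h' : Yᵀ * X = 0 := by simpa using congrArg transpose h
  rw [frobeniusSq_eq_trace, frobeniusSq_eq_trace, frobeniusSq_eq_trace, transpose_add,
    Matrix.add_mul, Matrix.mul_add, Matrix.mul_add, h, h', add_zero, zero_add, trace_add]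

lemma frobeniusSq_mul_of_transpose_mul_self_eq_one [DecidableEq m] {Q : Matrix l m ℝ}
    (hQ : Qᵀ * Q = 1) (M : Matrix m n ℝ) : frobeniusSq (Q * M) = frobeniusSq M := by
  rw [frobeniusSq_eq_trace, frobeniusSq_eq_trace, transpose_mul, Matrix.mul_assoc,
    ← Matrix.mul_assoc Qᵀ, hQ, Matrix.one_mul]

lemma frobeniusSq_mul_transpose_of_transpose_mul_self_eq_one [DecidableEq p] {V : Matrix n p ℝ}
    (hV : Vᵀ * V = 1) (M : Matrix m p ℝ) : frobeniusSq (M * Vᵀ) = frobeniusSq M := by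
  rw [← frobeniusSq_transpose, transpose_mul, transpose_transpose,
    frobeniusSq_mul_of_transpose_mul_self_eq_one hV, frobeniusSq_transpose]

section Projection

variable {P : Matrix m m ℝ}

lemma frobeniusSq_sub_mul_le (hPsymm : Pᵀ = P) (hPidem : P * P = P) (B : Matrix m n ℝ) :
    frobeniusSq (B - P * B) ≤ frobeniusSq B := by
  have horth : (B - P * B)ᵀ * (P * B) = 0 := by
    rw [transpose_sub, transpose_mul, hPsymm, Matrix.sub_mul, Matrix.mul_assoc,
      ← Matrix.mul_assoc P, hPidem, sub_self]
  calc frobeniusSq (B - P * B) ≤ frobeniusSq (B - P * B) + frobeniusSq (P * B) :=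
        le_add_of_nonneg_right (frobeniusSq_nonneg _)
    _ = frobeniusSq B := by rw [← frobeniusSq_add_of_transpose_mul_eq_zero horth, sub_add_cancel]

lemma frobeniusSq_sub_mul_le_of_mul_eq (hPsymm : Pᵀ = P) (hPidem : P * P = P)
    {Y : Matrix m l ℝ} (hPY : P * Y = Y) (A : Matrix m n ℝ) (C : Matrix l n ℝ) :
    frobeniusSq (A - P * A) ≤ frobeniusSq (A - Y * C) := by
  have hres : A - P * A = (A - Y * C) - P * (A - Y * C) := by
    rw [Matrix.mul_sub, ← Matrix.mul_assoc, hPY]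
    abel
  rw [hres]
  exact frobeniusSq_sub_mul_le hPsymm hPidem _

end Projection

end FrobeniusNorm

lemma isUnit_of_rank_eq_card_s8 {m K : Type*} [Fintype m] [DecidableEq m] [Field K]
    {M : Matrix m m K} (h : M.rank = Fintype.card m) : IsUnit M :=
  linearIndependent_rows_iff_isUnit.mp <| linearIndependent_iff_card_eq_finrank_span.mpr <| by
    rw [Set.finrank, ← rank_eq_finrank_span_row, h]

lemma mul_transpose_mul_inv_eq_one_of_rank_eq_card {m n : Type*} [Fintype m] [Fintype n]
    [DecidableEq m] {M : Matrix m n ℝ} (h : M.rank = Fintype.card m) :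
    M * (Mᵀ * (M * Mᵀ)⁻¹) = 1 := by
  have hunit : IsUnit (M * Mᵀ) := isUnit_of_rank_eq_card_s8 (by rw [rank_self_mul_transpose, h])
  rw [← Matrix.mul_assoc, mul_nonsing_inv _ ((isUnit_iff_isUnit_det _).mp hunit)]

section Blocks

variable {m n p q : Type*} [DecidableEq n] [DecidableEq p]

lemma toCols₂_transpose_mul_self [Fintype m] {U : Matrix m (n ⊕ p) ℝ}
    (hU : Uᵀ * U = 1) : U.toCols₂ᵀ * U.toCols₂ = 1 := by
  ext i j
  simpa [mul_apply, one_apply] using congrFun₂ hU (Sum.inr i) (Sum.inr j)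

lemma mul_diagonal_mul_transpose_eq_add_s8 [Fintype n] [Fintype p]
    (U : Matrix m (n ⊕ p) ℝ) (σ : n ⊕ p → ℝ) (V : Matrix q (n ⊕ p) ℝ) :
    U * diagonal σ * Vᵀ = U.toCols₁ * diagonal (σ ∘ Sum.inl) * V.toCols₁ᵀ
      + U.toCols₂ * diagonal (σ ∘ Sum.inr) * V.toCols₂ᵀ := by
  conv_lhs => rw [← fromCols_toCols U, ← fromCols_toCols V, ← Sum.elim_comp_inl_inr σ,
    ← fromBlocks_diagonal, transpose_fromCols, fromCols_mul_fromBlocks, fromCols_mul_fromRows]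
  simp

end Blocks

/-- The right-hand side is `U₂ (S₂V₂ᵀ - S₂Ω₂XV₁ᵀ)` with `Ω₂ = V₂ᵀΩ`, written through the block
matrix `[V₁ V₂]` so that orthonormality of its columns applies. -/
lemma add_sub_mul_mul_transpose_eq {m n k r l : Type*} [Fintype n] [Fintype k] [Fintype r]
    [Fintype l] [DecidableEq k] {U₁ : Matrix m k ℝ} {U₂ : Matrix m r ℝ}
    {S₁ : Matrix k k ℝ} {S₂ : Matrix r r ℝ} {V₁ : Matrix n k ℝ} {V₂ : Matrix n r ℝ}
    {Ω : Matrix n l ℝ} {X : Matrix l k ℝ} (hX : V₁ᵀ * Ω * X = 1) :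
    (U₁ * S₁ * V₁ᵀ + U₂ * S₂ * V₂ᵀ) - (U₁ * S₁ * V₁ᵀ + U₂ * S₂ * V₂ᵀ) * Ω * (X * V₁ᵀ)
      = U₂ * (fromCols (-(S₂ * (V₂ᵀ * Ω) * X)) S₂ * (fromCols V₁ V₂)ᵀ) := by
  have hcancel : V₁ᵀ * (Ω * (X * V₁ᵀ)) = V₁ᵀ := by
    rw [← Matrix.mul_assoc Ω, ← Matrix.mul_assoc, ← Matrix.mul_assoc, hX, Matrix.one_mul]
  rw [transpose_fromCols, fromCols_mul_fromRows, Matrix.add_mul, Matrix.add_mul]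
  simp only [Matrix.mul_assoc, hcancel, Matrix.neg_mul, Matrix.mul_add, Matrix.mul_neg]
  abel

end Matrix

theorem stmt_8_general {m n k r ℓ : ℕ}
    (U : Matrix (Fin m) (Fin k ⊕ Fin r) ℝ) (V : Matrix (Fin n) (Fin k ⊕ Fin r) ℝ)
    (σ : Fin k ⊕ Fin r → ℝ)
    (hU : Uᵀ * U = 1) (hV : Vᵀ * V = 1)
    (A : Matrix (Fin m) (Fin n) ℝ) (hA : A = U * Matrix.diagonal σ * Vᵀ)
    (Ω : Matrix (Fin n) (Fin ℓ) ℝ)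
    (Ω₁ : Matrix (Fin k) (Fin ℓ) ℝ) (hΩ₁ : Ω₁ = (V.submatrix id Sum.inl)ᵀ * Ω)
    (Ω₂ : Matrix (Fin r) (Fin ℓ) ℝ) (hΩ₂ : Ω₂ = (V.submatrix id Sum.inr)ᵀ * Ω)
    (hrank : Ω₁.rank = k)
    (P : Matrix (Fin m) (Fin m) ℝ)
    (hPsymm : Pᵀ = P) (hPidem : P * P = P)
    (hPY : P * (A * Ω) = A * Ω) :
    (∑ i, ∑ j, ((A - P * A) i j) ^ 2) ≤ (∑ i, ∑ j, (Matrix.diagonal (σ ∘ Sum.inr) i j) ^ 2)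
      + ∑ i, ∑ j, ((Matrix.diagonal (σ ∘ Sum.inr) * Ω₂ * (Ω₁ᵀ * (Ω₁ * Ω₁ᵀ)⁻¹)) i j) ^ 2 := by
  set Ω₁' := Ω₁ᵀ * (Ω₁ * Ω₁ᵀ)⁻¹
  set S₂ := diagonal (σ ∘ Sum.inr)
  have hright : V.toCols₁ᵀ * Ω * Ω₁' = 1 := by
    rw [← show Ω₁ = V.toCols₁ᵀ * Ω from hΩ₁]
    exact mul_transpose_mul_inv_eq_one_of_rank_eq_card (hrank.trans (Fintype.card_fin k).symm)
  have hres := add_sub_mul_mul_transpose_eq (U₁ := U.toCols₁) (U₂ := U.toCols₂)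
    (S₁ := diagonal (σ ∘ Sum.inl)) (S₂ := S₂) (V₂ := V.toCols₂) hright
  rw [← mul_diagonal_mul_transpose_eq_add_s8, ← hA, fromCols_toCols,
    ← show Ω₂ = V.toCols₂ᵀ * Ω from hΩ₂] at hres
  change frobeniusSq (A - P * A) ≤ frobeniusSq S₂ + frobeniusSq (S₂ * Ω₂ * Ω₁')
  calc frobeniusSq (A - P * A) ≤ frobeniusSq (A - A * Ω * (Ω₁' * V.toCols₁ᵀ)) :=
        frobeniusSq_sub_mul_le_of_mul_eq hPsymm hPidem hPY _ _
    _ = frobeniusSq (fromCols (-(S₂ * Ω₂ * Ω₁')) S₂) := by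
        rw [hres, frobeniusSq_mul_of_transpose_mul_self_eq_one (toCols₂_transpose_mul_self hU),
          frobeniusSq_mul_transpose_of_transpose_mul_self_eq_one hV]
    _ = frobeniusSq S₂ + frobeniusSq (S₂ * Ω₂ * Ω₁') := by
        rw [frobeniusSq_fromCols, frobeniusSq_neg, add_comm]

/-- If `A = U·diag(σ)·Vᵀ` is an SVD with right singular blocks `V₁, V₂`,
`Y = AΩ`, `Ω₁ = V₁ᵀΩ`, `Ω₂ = V₂ᵀΩ`, `Ω₁` has full row rank `k`, and `P` is the orthogonal
projection onto the column space of `Y`, then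
`‖A − P·A‖_F² ≤ ‖Σ₂‖_F² + ‖Σ₂·Ω₂·Ω₁†‖_F²` (Frobenius norms written as sums of squared entries), where `Ω₁† = Ω₁ᵀ(Ω₁Ω₁ᵀ)⁻¹`. -/
theorem stmt_8 {m n k r ℓ : ℕ}
    (U : Matrix (Fin m) (Fin k ⊕ Fin r) ℝ) (V : Matrix (Fin n) (Fin k ⊕ Fin r) ℝ)
    (σ : Fin k ⊕ Fin r → ℝ)
    (hU : Uᵀ * U = 1) (hV : Vᵀ * V = 1)
    (hσ : ∀ a, 0 ≤ σ a)
    (hord : ∀ (i : Fin k) (j : Fin r), σ (Sum.inr j) ≤ σ (Sum.inl i))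
    (A : Matrix (Fin m) (Fin n) ℝ) (hA : A = U * Matrix.diagonal σ * Vᵀ)
    (Ω : Matrix (Fin n) (Fin ℓ) ℝ)
    (Ω₁ : Matrix (Fin k) (Fin ℓ) ℝ) (hΩ₁ : Ω₁ = (V.submatrix id Sum.inl)ᵀ * Ω)
    (Ω₂ : Matrix (Fin r) (Fin ℓ) ℝ) (hΩ₂ : Ω₂ = (V.submatrix id Sum.inr)ᵀ * Ω)
    (hrank : Ω₁.rank = k)
    (P : Matrix (Fin m) (Fin m) ℝ)
    (hPsymm : Pᵀ = P) (hPidem : P * P = P)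
    (hPY : P * (A * Ω) = A * Ω)
    (hPrange : ∃ B : Matrix (Fin ℓ) (Fin m) ℝ, P = (A * Ω) * B) :
    (∑ i, ∑ j, ((A - P * A) i j) ^ 2) ≤ (∑ i, ∑ j, (Matrix.diagonal (σ ∘ Sum.inr) i j) ^ 2)
      + ∑ i, ∑ j, ((Matrix.diagonal (σ ∘ Sum.inr) * Ω₂ * (Ω₁ᵀ * (Ω₁ * Ω₁ᵀ)⁻¹)) i j) ^ 2 :=
  stmt_8_general U V σ hU hV A hA Ω Ω₁ hΩ₁ Ω₂ hΩ₂ hrank P hPsymm hPidem hPY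
end

section
/- Let s* ∈ ℝⁿ (n ≥ 2) be nonnegative leverage scores summing to k with maximum entry ‖s*‖_∞ > 0 attained at index j, and let γ > 1. Define s by s_j = ‖s*‖_∞/γ and s_i = s*_i + (1 − γ^{-1})·‖s*‖_∞/(n−1) for i ≠ j. Then ∑_i s_i = k, s*_i ≤ γ·s_i for all i, and q(s) = max_i sqrt(s*_i)/s_i ≤ max( γ/sqrt(‖s*‖_∞), (n−1)/(sqrt(‖s*‖_∞)·(1 − γ^{-1})) ). -/
open Finset

/-!
The construction moves the mass `(1 - γ⁻¹) σ j` off the maximal entry `j` and spreads it evenly,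
as a share `c`, over the other `n - 1` entries, so the total is unchanged. At `j` the ratio
`√σ j / s j` is exactly `γ / √σ j`; elsewhere `√σ i / (σ i + c) ≤ √σ j / c` because `σ i ≤ σ j`,
and `√σ j / c` is the second term of the bound.
-/

noncomputable def spreadScores {ι : Type*} [Fintype ι] [DecidableEq ι]
    (γ : ℝ) (σ : ι → ℝ) (j : ι) : ι → ℝ :=
  fun i => if i = j then σ j / γ else σ i + (1 - γ⁻¹) * σ j / ((Fintype.card ι : ℝ) - 1)

section spreadScores

variable {ι : Type*} [Fintype ι] [DecidableEq ι] {γ : ℝ} {σ : ι → ℝ} {i j : ι}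

@[simp]
theorem spreadScores_self : spreadScores γ σ j j = σ j / γ := if_pos rfl

theorem spreadScores_of_ne (h : i ≠ j) :
    spreadScores γ σ j i = σ i + (1 - γ⁻¹) * σ j / ((Fintype.card ι : ℝ) - 1) := if_neg h

omit [DecidableEq ι] in
theorem card_sub_one_pos (hcard : 1 < Fintype.card ι) : 0 < (Fintype.card ι : ℝ) - 1 := by
  have : (1 : ℝ) < Fintype.card ι := by exact_mod_cast hcard
  linarith

theorem sum_spreadScores (hcard : 1 < Fintype.card ι) :
    ∑ i, spreadScores γ σ j i = ∑ i, σ i := by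
  have hd := (card_sub_one_pos hcard).ne'
  have hothers : ((univ.erase j).card : ℝ) = (Fintype.card ι : ℝ) - 1 := by
    rw [card_erase_of_mem (mem_univ j), card_univ, Nat.cast_sub hcard.le, Nat.cast_one]
  rw [← add_sum_erase _ _ (mem_univ j), ← add_sum_erase _ σ (mem_univ j),
    sum_congr rfl fun i hi => spreadScores_of_ne (ne_of_mem_erase hi), sum_add_distrib,
    sum_const, nsmul_eq_mul, hothers, spreadScores_self]
  have hsplit : σ j / γ + (1 - γ⁻¹) * σ j = σ j := by ring
  field_simp
  linear_combination ((Fintype.card ι : ℝ) - 1) * hsplit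

theorem le_mul_spreadScores (hγ : 1 ≤ γ) (hσ : ∀ i, 0 ≤ σ i) (i : ι) :
    σ i ≤ γ * spreadScores γ σ j i := by
  have hγ0 : 0 < γ := one_pos.trans_le hγ
  rcases eq_or_ne i j with rfl | hij
  · rw [spreadScores_self, mul_div_cancel₀ _ hγ0.ne']
  · have hd : 0 ≤ (Fintype.card ι : ℝ) - 1 :=
      sub_nonneg.mpr (Nat.one_le_cast.mpr (Fintype.card_pos_iff.mpr ⟨j⟩))
    have hshare : 0 ≤ (1 - γ⁻¹) * σ j / ((Fintype.card ι : ℝ) - 1) :=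
      div_nonneg (mul_nonneg (sub_nonneg.mpr (inv_le_one_of_one_le₀ hγ)) (hσ j)) hd
    rw [spreadScores_of_ne hij]
    nlinarith [hσ i]

theorem sqrt_div_spreadScores_le (hγ : 1 < γ) (hcard : 1 < Fintype.card ι)
    (hσi : 0 ≤ σ i) (hij : σ i ≤ σ j) (hj : 0 < σ j) :
    √(σ i) / spreadScores γ σ j i ≤
      max (γ / √(σ j)) (((Fintype.card ι : ℝ) - 1) / (√(σ j) * (1 - γ⁻¹))) := by
  rcases eq_or_ne i j with rfl | hne
  · refine le_of_eq_of_le ?_ (le_max_left _ _)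
    rw [spreadScores_self, div_div_eq_mul_div, mul_div_right_comm, Real.sqrt_div_self', one_div,
      div_eq_inv_mul]
  · refine le_max_of_le_right ?_
    have hfrac : 0 < 1 - γ⁻¹ := sub_pos.mpr (inv_lt_one_of_one_lt₀ hγ)
    have hd := card_sub_one_pos hcard
    set c := (1 - γ⁻¹) * σ j / ((Fintype.card ι : ℝ) - 1) with hc
    have hcpos : 0 < c := div_pos (mul_pos hfrac hj) hd
    rw [spreadScores_of_ne hne]
    calc √(σ i) / (σ i + c) ≤ √(σ j) / c :=
          div_le_div₀ (Real.sqrt_nonneg _) (Real.sqrt_le_sqrt hij) hcpos (by linarith)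
      _ = ((Fintype.card ι : ℝ) - 1) / (√(σ j) * (1 - γ⁻¹)) := by
          have : 0 < √(σ j) := Real.sqrt_pos.mpr hj
          rw [hc]
          field_simp
          rw [Real.sq_sqrt hj.le]

end spreadScores

/-- The explicit construction `s_j = ‖s*‖_∞/γ`,
`s_i = s*_i + (1−γ⁻¹)·‖s*‖_∞/(n−1)` for `i ≠ j` is feasible for the constrained problem,
sums to `k`, and its `q`-value is at most
`max(γ/sqrt(‖s*‖_∞), (n−1)/(sqrt(‖s*‖_∞)·(1−γ⁻¹)))`. -/
theorem stmt_14 {n : ℕ} (hn : 2 ≤ n) (k γ : ℝ) (hγ : 1 < γ)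
    (sStar : Fin n → ℝ) (hpos : ∀ i, 0 ≤ sStar i) (hsum : ∑ i, sStar i = k)
    (j : Fin n) (hj : ∀ i, sStar i ≤ sStar j) (hjpos : 0 < sStar j)
    (s : Fin n → ℝ)
    (hdef : s = fun i => if i = j then sStar j / γ
      else sStar i + (1 - γ⁻¹) * sStar j / ((n : ℝ) - 1)) :
    (∑ i, s i = k) ∧ (∀ i, sStar i ≤ γ * s i) ∧
    (Finset.univ.sup' ⟨j, Finset.mem_univ j⟩ fun i => Real.sqrt (sStar i) / s i)
      ≤ max (γ / Real.sqrt (sStar j))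
            (((n : ℝ) - 1) / (Real.sqrt (sStar j) * (1 - γ⁻¹))) := by
  have hcard : 1 < Fintype.card (Fin n) := by rw [Fintype.card_fin]; omega
  have hs : s = spreadScores γ sStar j := by
    rw [hdef]
    unfold spreadScores
    rw [Fintype.card_fin]
  subst hs
  refine ⟨(sum_spreadScores hcard).trans hsum, le_mul_spreadScores hγ.le hpos, ?_⟩
  refine sup'_le _ _ fun i _ => ?_
  simpa only [Fintype.card_fin] using sqrt_div_spreadScores_le hγ hcard (hpos i) (hj i) hjpos
end
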